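/- arXiv:2011.06150 — 3 statements merged into one kernel-verified Lean document; each statement's English description precedes it below -/
import Mathlib

section
/- Consider m machines and b cliques V_1, …, V_b, each clique containing exactly m jobs, and any assignment of all jobs to machines such that every machine receives exactly b jobs (one per 'layer' position 1,…,b). Fix i ∈ [m]. Construct the bipartite graph whose left vertices are the cliques V_1,…,V_b, right vertices are the layers 1,…,b, with an edge between clique V_k and layer ℓ iff some job of V_k is assigned at position ℓ on one of the machines m_i,…,m_m. Then this bipartite graph has a perfect matching. -/
/-! Let `w k ℓ` count the machines `μ ≥ i` whose job in layer `ℓ` belongs to clique `k`. Each layer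
meets each of the `m - i` later machines once, and since each of the first `i` machines carries
exactly one job of every clique, each clique has exactly `m - i` jobs on the later machines. So `w`
is the biadjacency matrix of an `(m - i)`-regular bipartite multigraph, and Hall's condition
follows by double counting: a set `S` of cliques sends `(m - i) * #S` edges into its
neighbourhood, which absorbs at most `m - i` of them per layer. -/

open Finset Function

theorem exists_injective_ne_zero_of_le_sum_of_sum_le {α β : Type*} [Fintype α] [Fintype β]
    [DecidableEq β] (w : α → β → ℕ) {d : ℕ} (hd : 0 < d) (hleft : ∀ a, d ≤ ∑ b, w a b)
    (hright : ∀ b, ∑ a, w a b ≤ d) :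
    ∃ f : α → β, Injective f ∧ ∀ a, w a (f a) ≠ 0 := by
  let nbhd : α → Finset β := fun a => {b | w a b ≠ 0}
  have hall (S : Finset α) : #S ≤ #(S.biUnion nbhd) := by
    set N := S.biUnion nbhd
    have hsupp (a : α) (ha : a ∈ S) : ∑ b ∈ N, w a b = ∑ b, w a b :=
      sum_subset (subset_univ N) fun b _ hb => by
        by_contra h
        exact hb (mem_biUnion.2 ⟨a, ha, by simpa [nbhd] using h⟩)
    refine Nat.le_of_mul_le_mul_left ?_ hd
    calc d * #S = ∑ a ∈ S, d := by rw [sum_const, smul_eq_mul, mul_comm]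
      _ ≤ ∑ a ∈ S, ∑ b ∈ N, w a b := sum_le_sum fun a ha => (hleft a).trans_eq (hsupp a ha).symm
      _ = ∑ b ∈ N, ∑ a ∈ S, w a b := sum_comm
      _ ≤ ∑ b ∈ N, d :=
          sum_le_sum fun b _ => (sum_le_sum_of_subset (subset_univ S)).trans (hright b)
      _ = d * #N := by rw [sum_const, smul_eq_mul, mul_comm]
  obtain ⟨f, hf, hmem⟩ := (all_card_le_biUnion_card_iff_existsInjective' nbhd).mp hall
  exact ⟨f, hf, fun a => by simpa [nbhd] using hmem a⟩

theorem Function.Bijective.card_fiber_eq_one {α β : Type*} [Fintype α] [DecidableEq β]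
    {g : α → β} (hg : Bijective g) (b : β) : #{a | g a = b} = 1 := by
  obtain ⟨a, rfl⟩ := hg.2 b
  exact card_eq_one.2 ⟨a, by ext; simp [hg.1.eq_iff]⟩

/-- Clique/layer bipartite matching: with `m` machines and `b` cliques, where
`clique μ ℓ` is the clique of the job in position (layer) `ℓ` on machine `μ`,
if each machine before `i` has exactly one job of each clique (the map
`ℓ ↦ clique μ ℓ` is bijective), and each clique has exactly `m` jobs in total,
then the bipartite graph on cliques and layers with an edge between clique `k`
and layer `ℓ` iff some machine `μ ≥ i` has a job of clique `k` in layer `ℓ`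
has a perfect matching. -/
theorem clique_layer_perfect_matching
    (m b : ℕ) (i : Fin m)
    (clique : Fin m → Fin b → Fin b)
    (hbefore : ∀ μ : Fin m, μ < i → Function.Bijective (clique μ))
    (htotal : ∀ k : Fin b,
      (Finset.univ.filter (fun q : Fin m × Fin b => clique q.1 q.2 = k)).card = m) :
    ∃ f : Fin b → Fin b, Function.Bijective f ∧
      ∀ k : Fin b, ∃ μ : Fin m, i ≤ μ ∧ clique μ (f k) = k := by
  let w : Fin b → Fin b → ℕ := fun k ℓ => #{μ ∈ Ici i | clique μ ℓ = k}
  have hleft (k : Fin b) : ∑ ℓ, w k ℓ = m - i := by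
    have hjobs : ∑ μ, #{ℓ | clique μ ℓ = k} = m :=
      Eq.trans (by simp only [card_filter, Fintype.sum_prod_type]) (htotal k)
    have hearly : ∑ μ ∈ (Ici i)ᶜ, #{ℓ | clique μ ℓ = k} = i := by
      rw [← Fin.card_Iio i, card_eq_sum_ones]
      exact sum_congr (by ext; simp) fun μ hμ =>
        (hbefore μ (by simpa using hμ)).card_fiber_eq_one k
    rw [← sum_compl_add_sum (Ici i), hearly] at hjobs
    calc ∑ ℓ, w k ℓ = ∑ μ ∈ Ici i, #{ℓ | clique μ ℓ = k} :=
          (sum_card_bipartiteAbove_eq_sum_card_bipartiteBelow _).symm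
      _ = m - i := by omega
  have hright (ℓ : Fin b) : ∑ k, w k ℓ = m - i :=
    (card_eq_sum_card_fiberwise fun _ _ => mem_univ _).symm.trans (Fin.card_Ici i)
  obtain ⟨f, hf, hw⟩ := exists_injective_ne_zero_of_le_sum_of_sum_le w (by omega)
    (fun k => (hleft k).ge) (fun ℓ => (hright ℓ).le)
  refine ⟨f, Finite.injective_iff_bijective.mp hf, fun k => ?_⟩
  obtain ⟨μ, hμ⟩ := card_ne_zero.mp (hw k)
  exact ⟨μ, by simpa using hμ⟩
end

section
/- The minimum total completion time of n jobs on m identical machines with an incompatibility graph that is a disjoint union of cliques each of size at most m equals the minimum total completion time without any incompatibility constraints. (Adding clique incompatibilities, where each clique has at most m jobs, does not increase the optimal total completion time on identical machines.) -/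
/-!
In any schedule, the jobs that are `k`-th from the end on their machine are at most `m`, one per
machine. Call `k` the level of such a job. The bipartite multigraph with an edge from the level to
the clique of each job has maximum degree at most `m`, so by König's edge colouring theorem its
edges can be coloured with `m` colours. Putting each job on the machine of its colour and
sequencing every machine by decreasing level gives a schedule that respects the cliques in which
no job is further from the end than before, so every unconstrained cost is at least some
constrained one. König's theorem is obtained by padding the multigraph to an `m`-regular one and
peeling off perfect matchings with Hall's theorem.
-/

open Finset

section Konig

variable {α β : Type*} [Fintype α] [Fintype β] [DecidableEq β]

theorem exists_equiv_forall_pos_of_sum_eq {k : ℕ} (hk : 0 < k) (M : α → β → ℕ)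
    (hrow : ∀ a, ∑ b, M a b = k) (hcol : ∀ b, ∑ a, M a b = k) :
    ∃ τ : α ≃ β, ∀ a, 0 < M a (τ a) := by
  let support (a : α) : Finset β := {b | 0 < M a b}
  have hall (s : Finset α) : #s ≤ #(s.biUnion support) := by
    refine Nat.le_of_mul_le_mul_left ?_ hk
    calc k * #s = ∑ a ∈ s, ∑ b ∈ s.biUnion support, M a b := by
          rw [mul_comm, ← smul_eq_mul, ← sum_const]
          refine sum_congr rfl fun a ha => ?_
          rw [← hrow a]
          refine (sum_subset (subset_univ _) fun b _ hb => ?_).symm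
          by_contra hab
          exact hb (mem_biUnion.2 ⟨a, ha, by simpa [support] using Nat.pos_of_ne_zero hab⟩)
      _ ≤ ∑ a, ∑ b ∈ s.biUnion support, M a b := sum_le_sum_of_subset (subset_univ s)
      _ = k * #(s.biUnion support) := by
          rw [sum_comm, mul_comm, ← smul_eq_mul, ← sum_const]
          exact sum_congr rfl fun b _ => hcol b
  obtain ⟨f, hf_inj, hf⟩ := (all_card_le_biUnion_card_iff_exists_injective support).1 hall
  have hcard : Fintype.card α = Fintype.card β := by
    refine Nat.eq_of_mul_eq_mul_left hk ?_
    calc k * Fintype.card α = ∑ a, ∑ b, M a b := by simp [hrow, mul_comm]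
      _ = k * Fintype.card β := by rw [sum_comm]; simp [hcol, mul_comm]
  refine ⟨Equiv.ofBijective f ((Fintype.bijective_iff_injective_and_card f).2 ⟨hf_inj, hcard⟩),
    fun a => ?_⟩
  simpa [support] using hf a

theorem exists_equivs_of_sum_eq (m : ℕ) (M : α → β → ℕ)
    (hrow : ∀ a, ∑ b, M a b = m) (hcol : ∀ b, ∑ a, M a b = m) :
    ∃ σ : Fin m → α ≃ β, ∀ a b, M a b = #{k | σ k a = b} := by
  induction m generalizing M with
  | zero =>
    refine ⟨Fin.elim0, fun a b => ?_⟩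
    simpa using (sum_eq_zero_iff.1 (hrow a)) b (mem_univ b)
  | succ m ih =>
    obtain ⟨τ, hτ⟩ := exists_equiv_forall_pos_of_sum_eq m.succ_pos M hrow hcol
    let M' (a : α) (b : β) : ℕ := M a b - if τ a = b then 1 else 0
    have hM (a : α) (b : β) : M a b = M' a b + if τ a = b then 1 else 0 := by
      by_cases h : τ a = b
      · subst h
        have := hτ a
        simp only [M', if_true]
        omega
      · simp [M', h]
    have hrow' (a : α) : ∑ b, M' a b = m := by
      have := hrow a
      simp only [hM a, sum_add_distrib, sum_ite_eq, mem_univ, if_true] at this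
      omega
    have hcol' (b : β) : ∑ a, M' a b = m := by
      have hτ_col : ∑ a, (if τ a = b then 1 else 0) = 1 := by
        rw [← card_filter, card_eq_one]
        exact ⟨τ.symm b, by ext; simp [τ.eq_symm_apply]⟩
      have := hcol b
      simp only [hM _ b, sum_add_distrib, hτ_col] at this
      omega
    obtain ⟨σ, hσ⟩ := ih M' hrow' hcol'
    refine ⟨Fin.cons τ σ, fun a b => ?_⟩
    rw [card_filter, Fin.sum_univ_succ, hM, hσ, card_filter, add_comm]
    simp

theorem exists_sum_eq_extension [DecidableEq α] (m : ℕ) (M : α → β → ℕ)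
    (hrow : ∀ a, ∑ b, M a b ≤ m) (hcol : ∀ b, ∑ a, M a b ≤ m) :
    ∃ N : α ⊕ β → β ⊕ α → ℕ, (∀ x, ∑ y, N x y = m) ∧ (∀ y, ∑ x, N x y = m) ∧
      ∀ a b, N (.inl a) (.inl b) = M a b := by
  -- `M` sits in the top-left block, its transpose in the bottom-right one, and the
  -- deficits of the rows and columns of `M` on the diagonals of the other two blocks.
  refine ⟨Sum.elim (fun a => Sum.elim (M a) fun a' => if a = a' then m - ∑ b, M a b else 0)
    (fun b' => Sum.elim (fun b => if b = b' then m - ∑ a, M a b else 0) fun a => M a b'),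
    ?_, ?_, fun _ _ => rfl⟩
  · rintro (a | b)
    · have := hrow a
      simp only [Fintype.sum_sum_type, Sum.elim_inl, Sum.elim_inr, sum_ite_eq, mem_univ, if_true]
      omega
    · have := hcol b
      simp only [Fintype.sum_sum_type, Sum.elim_inl, Sum.elim_inr, sum_ite_eq', mem_univ, if_true]
      omega
  · rintro (b | a)
    · have := hcol b
      simp only [Fintype.sum_sum_type, Sum.elim_inl, Sum.elim_inr, sum_ite_eq, mem_univ, if_true]
      omega
    · have := hrow a
      simp only [Fintype.sum_sum_type, Sum.elim_inl, Sum.elim_inr, sum_ite_eq', mem_univ, if_true]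
      omega

end Konig

theorem exists_fiberwise_injective_of_card_le {J I C : Type*} [Fintype J] [DecidableEq I]
    (h : J → I) (K : I → Finset C) (hK : ∀ i, #{j | h j = i} ≤ #(K i)) :
    ∃ c : J → C, (∀ j, c j ∈ K (h j)) ∧ ∀ j j', h j = h j' → c j = c j' → j = j' := by
  have e (i : I) : {j // h j = i} ↪ K i := Classical.choice <|
    Function.Embedding.nonempty_of_card_le (by simpa [Fintype.card_subtype] using hK i)
  have hc (i : I) (j : J) (hj : h j = i) : (e (h j) ⟨j, rfl⟩ : C) = e i ⟨j, hj⟩ := by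
    subst hj; rfl
  refine ⟨fun j => e (h j) ⟨j, rfl⟩, fun j => (e (h j) ⟨j, rfl⟩).2, fun j j' hjj' hcc => ?_⟩
  have hcc' : (e (h j) ⟨j, rfl⟩ : C) = e (h j) ⟨j', hjj'.symm⟩ := hcc.trans (hc _ j' hjj'.symm)
  exact congrArg Subtype.val ((e (h j)).injective (Subtype.ext hcc'))

/-- König's edge colouring theorem for the bipartite multigraph with an edge `f j — g j` for
each `j`. -/
theorem exists_coloring_injective_on_fibers {J A B : Type*} [Fintype J] [Fintype A] [Fintype B]
    [DecidableEq A] [DecidableEq B] (m : ℕ) (f : J → A) (g : J → B)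
    (hf : ∀ a, #{j | f j = a} ≤ m) (hg : ∀ b, #{j | g j = b} ≤ m) :
    ∃ c : J → Fin m, (∀ j j', f j = f j' → c j = c j' → j = j') ∧
      (∀ j j', g j = g j' → c j = c j' → j = j') := by
  let M (a : A) (b : B) : ℕ := #{j | f j = a ∧ g j = b}
  have hrow (a : A) : ∑ b, M a b = #{j | f j = a} := by
    rw [card_eq_sum_card_fiberwise (f := g) (t := univ) fun _ _ => mem_univ _]
    simp [M, filter_filter]
  have hcol (b : B) : ∑ a, M a b = #{j | g j = b} := by
    rw [card_eq_sum_card_fiberwise (f := f) (t := univ) fun _ _ => mem_univ _]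
    simp [M, filter_filter, and_comm]
  obtain ⟨N, hNrow, hNcol, hNM⟩ :=
    exists_sum_eq_extension m M (fun a => hrow a ▸ hf a) (fun b => hcol b ▸ hg b)
  obtain ⟨σ, hσ⟩ := exists_equivs_of_sum_eq m N hNrow hNcol
  -- the `M a b` jobs with `(f, g) = (a, b)` get distinct colours `k` among the `M a b` with
  -- `σ k a = b`
  obtain ⟨c, hcK, hc_inj⟩ := exists_fiberwise_injective_of_card_le (fun j => (f j, g j))
    (fun ab => {k | σ k (.inl ab.1) = .inl ab.2}) fun ⟨a, b⟩ => by
      rw [← hσ, hNM]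
      simp [M]
  have hσc (j : J) : σ (c j) (.inl (f j)) = .inl (g j) := by simpa using hcK j
  refine ⟨c, fun j j' hf hcc => hc_inj j j' (Prod.ext hf ?_) hcc,
    fun j j' hg hcc => hc_inj j j' (Prod.ext ?_ hg) hcc⟩
  · have hσj' := hσc j'
    rw [← hcc, ← hf] at hσj'
    exact Sum.inl_injective ((hσc j).symm.trans hσj')
  · have hσj' := hσc j'
    rw [← hcc, ← hg] at hσj'
    exact Sum.inl_injective ((σ (c j)).injective ((hσc j).trans hσj'.symm))

namespace Schedule

variable {J M P : Type*} [Fintype J] [DecidableEq M] [LinearOrder P]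

/-- The position of `j` counted from the end of its machine, the last job being at position `1`. -/
def rankFromEnd (mach : J → M) (pos : J → P) (j : J) : ℕ :=
  #{j' | mach j' = mach j ∧ pos j ≤ pos j'}

variable {mach : J → M} {pos : J → P}

theorem rankFromEnd_pos (j : J) : 0 < rankFromEnd mach pos j :=
  card_pos.2 ⟨j, by simp⟩

theorem rankFromEnd_lt_of_pos_lt {j j' : J} (hmach : mach j = mach j') (hpos : pos j < pos j') :
    rankFromEnd mach pos j' < rankFromEnd mach pos j := by
  refine card_lt_card ⟨fun x hx => ?_, fun hsub => ?_⟩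
  · simp only [mem_filter, mem_univ, true_and] at hx ⊢
    exact ⟨hx.1.trans hmach.symm, hpos.le.trans hx.2⟩
  · have := hsub (by simp : j ∈ ({x | mach x = mach j ∧ pos j ≤ pos x} : Finset J))
    simp only [mem_filter, mem_univ, true_and] at this
    exact absurd this.2 (not_le.2 hpos)

theorem eq_of_rankFromEnd_eq (hinj : ∀ j j', mach j = mach j' → pos j = pos j' → j = j')
    {j j' : J} (hmach : mach j = mach j') (hrank : rankFromEnd mach pos j = rankFromEnd mach pos j') :
    j = j' := by
  rcases lt_trichotomy (pos j) (pos j') with h | h | h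
  · exact absurd hrank (rankFromEnd_lt_of_pos_lt hmach h).ne'
  · exact hinj j j' hmach h
  · exact absurd hrank (rankFromEnd_lt_of_pos_lt hmach.symm h).ne

theorem card_rankFromEnd_eq_le [Fintype M]
    (hinj : ∀ j j', mach j = mach j' → pos j = pos j' → j = j') (k : ℕ) :
    #{j | rankFromEnd mach pos j = k} ≤ Fintype.card M := by
  refine (card_le_card_of_injOn mach (fun _ _ => mem_univ _) fun x hx y hy hxy => ?_).trans_eq
    (card_univ)
  simp only [mem_coe, mem_filter, mem_univ, true_and] at hx hy
  exact eq_of_rankFromEnd_eq hinj hxy (hx.trans hy.symm)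

/-- Jobs are put on machines by a König colouring of (level `w`, clique) and sequenced by
decreasing level. -/
theorem exists_rankFromEnd_le {B : Type*} [Fintype B] [DecidableEq B] {m : ℕ}
    (clique : J → B) (hclique : ∀ c, #{j | clique j = c} ≤ m)
    (w : J → ℕ) (hw_pos : ∀ j, 0 < w j) (hw : ∀ k, #{j | w j = k} ≤ m) :
    ∃ (mach : J → Fin m) (pos : J → ℕ),
      (∀ j j', mach j = mach j' → pos j = pos j' → j = j') ∧
      (∀ j j', j ≠ j' → clique j = clique j' → mach j ≠ mach j') ∧
      ∀ j, rankFromEnd mach pos j ≤ w j := by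
  obtain ⟨c, hc_level, hc_clique⟩ := exists_coloring_injective_on_fibers m
    (Set.rangeFactorization w) clique
    (fun ⟨k, _⟩ => by simpa [Set.rangeFactorization_eq_iff] using hw k) hclique
  have hc_w (j j' : J) (hw : w j = w j') (hcc : c j = c j') : j = j' :=
    hc_level j j' (Subtype.ext hw) hcc
  have hw_le (j : J) : w j ≤ univ.sup w := le_sup (mem_univ j)
  refine ⟨c, fun j => univ.sup w - w j, fun j j' hcc hpos => hc_w j j' ?_ hcc,
    fun j j' hne hcl hcc => hne (hc_clique j j' hcl hcc), fun j => ?_⟩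
  · have := hw_le j; have := hw_le j'
    simp only at hpos
    omega
  calc rankFromEnd c (fun j => univ.sup w - w j) j ≤ #(Icc 1 (w j)) := by
        refine card_le_card_of_injOn w (fun j' hj' => ?_) fun x hx y hy hxy => ?_
        · simp only [mem_coe, mem_filter, mem_univ, true_and, mem_Icc] at hj' ⊢
          have := hw_le j; have := hw_le j'; have := hw_pos j'
          omega
        · simp only [mem_coe, mem_filter, mem_univ, true_and] at hx hy
          exact hc_w x y hxy (hx.1.trans hy.1.symm)
    _ = w j := by simp

end Schedule

theorem clique_constraints_do_not_increase_optimum_general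
    (n m b : ℕ)
    (p : Fin n → ℕ) (clique : Fin n → Fin b)
    (hsize : ∀ c : Fin b, (Finset.univ.filter (fun j : Fin n => clique j = c)).card ≤ m) :
    sInf {cost : ℕ | ∃ (mach : Fin n → Fin m) (pos : Fin n → ℕ),
        (∀ j j' : Fin n, mach j = mach j' → pos j = pos j' → j = j') ∧
        (∀ j j' : Fin n, j ≠ j' → clique j = clique j' → mach j ≠ mach j') ∧
        cost = ∑ j : Fin n,
          (Finset.univ.filter (fun j' : Fin n =>
            mach j' = mach j ∧ pos j ≤ pos j')).card * p j}
    = sInf {cost : ℕ | ∃ (mach : Fin n → Fin m) (pos : Fin n → ℕ),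
        (∀ j j' : Fin n, mach j = mach j' → pos j = pos j' → j = j') ∧
        cost = ∑ j : Fin n,
          (Finset.univ.filter (fun j' : Fin n =>
            mach j' = mach j ∧ pos j ≤ pos j')).card * p j} := by
  refine csInf_eq_csInf_of_forall_exists_le ?_ ?_
  · rintro _ ⟨mach, pos, hinj, -, rfl⟩
    exact ⟨_, ⟨mach, pos, hinj, rfl⟩, le_rfl⟩
  · rintro _ ⟨mach, pos, hinj, rfl⟩
    obtain ⟨mach', pos', hinj', hclique', hrank⟩ := Schedule.exists_rankFromEnd_le clique hsize
      (Schedule.rankFromEnd mach pos) Schedule.rankFromEnd_pos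
      fun k => (Schedule.card_rankFromEnd_eq_le hinj k).trans_eq (Fintype.card_fin m)
    exact ⟨_, ⟨mach', pos', hinj', hclique', rfl⟩,
      sum_le_sum fun j _ => Nat.mul_le_mul_right (p j) (hrank j)⟩

/-- On `m` identical machines, if the incompatibility graph is a disjoint union of
cliques each of size at most `m`, the optimal total completion time with the clique
constraints equals the optimal total completion time without any constraints. -/
theorem clique_constraints_do_not_increase_optimum
    (n m b : ℕ) (hm : 0 < m)
    (p : Fin n → ℕ) (clique : Fin n → Fin b)
    (hsize : ∀ c : Fin b, (Finset.univ.filter (fun j : Fin n => clique j = c)).card ≤ m) :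
    sInf {cost : ℕ | ∃ (mach : Fin n → Fin m) (pos : Fin n → ℕ),
        (∀ j j' : Fin n, mach j = mach j' → pos j = pos j' → j = j') ∧
        (∀ j j' : Fin n, j ≠ j' → clique j = clique j' → mach j ≠ mach j') ∧
        cost = ∑ j : Fin n,
          (Finset.univ.filter (fun j' : Fin n =>
            mach j' = mach j ∧ pos j ≤ pos j')).card * p j}
    = sInf {cost : ℕ | ∃ (mach : Fin n → Fin m) (pos : Fin n → ℕ),
        (∀ j j' : Fin n, mach j = mach j' → pos j = pos j' → j = j') ∧
        cost = ∑ j : Fin n,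
          (Finset.univ.filter (fun j' : Fin n =>
            mach j' = mach j ∧ pos j ≤ pos j')).card * p j} :=
  clique_constraints_do_not_increase_optimum_general n m b p clique hsize
end

section
/- Machine contribution identity for weighted completion times: let a machine process jobs of kinds 1,…,ϑ in Smith order π, with x_j jobs of kind j, each of processing time p_j > 0 and weight w_j ≥ 0, where ρ(j) = w_j/p_j satisfies ρ(π(1)) ≥ ρ(π(2)) ≥ … ≥ ρ(π(ϑ)) (set ρ(π(ϑ+1)) = 0). Define z_j = ∑_{ℓ=1}^{j} p_{π(ℓ)}·x_{π(ℓ)}. Then the sum of weighted completion times when jobs are processed consecutively in order π (jobs of the same kind consecutively) equals ∑_{j=1}^{ϑ} ( (1/2)·z_j²·(ρ(π(j)) − ρ(π(j+1))) + (1/2)·x_{π(j)}·p_{π(j)}·w_{π(j)} ). -/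
/-! Summing the arithmetic progression of completion times inside the block of kind `π j` gives
`w x Z_j + w p x (x + 1) / 2`, which (as `w = ρ p`) equals `½ ρ (Z_{j+1}² - Z_j²) + ½ x p w`.
Summing over `j` and shifting the index of the `Z_j²` terms (Abel summation, using `Z_0 = 0`)
produces the differences `ρ(π j) - ρ(π (j+1))`. -/

open Finset

theorem Finset.sum_range_eq_sum_range_succ_ite {M : Type*} [AddCommMonoid M] (g : ℕ → M)
    (hg : g 0 = 0) (n : ℕ) :
    ∑ j ∈ range n, g j = ∑ j ∈ range n, if j + 1 < n then g (j + 1) else 0 := by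
  cases n with
  | zero => simp
  | succ n =>
    rw [sum_range_succ', hg, add_zero, sum_range_succ, if_neg (lt_irrefl _), add_zero]
    exact sum_congr rfl fun j hj => (if_pos (Nat.succ_lt_succ (mem_range.mp hj))).symm

theorem sum_range_mul_add_succ_mul (w z p : ℝ) (m : ℕ) :
    ∑ r ∈ range m, w * (z + ((r : ℝ) + 1) * p) = w * m * z + w * p * m * (m + 1) / 2 := by
  induction m with
  | zero => simp
  | succ m ih => rw [sum_range_succ, ih]; push_cast; ring

theorem sum_range_mul_add_succ_mul_eq_sq_sub_sq (w z p : ℝ) (m : ℕ) (hp : p ≠ 0) :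
    ∑ r ∈ range m, w * (z + ((r : ℝ) + 1) * p)
      = 1 / 2 * (z + p * m) ^ 2 * (w / p) - 1 / 2 * z ^ 2 * (w / p) + 1 / 2 * m * p * w := by
  rw [sum_range_mul_add_succ_mul]
  field_simp
  ring

theorem machine_contribution_identity_general
    (ϑ : ℕ) (p w : ℕ → ℝ) (x : ℕ → ℕ) (π : ℕ → ℕ)
    (hπ : Set.BijOn π (Set.Iio ϑ) (Set.Iio ϑ))
    (hp : ∀ j < ϑ, 0 < p j) :
    ∑ j ∈ Finset.range ϑ, ∑ r ∈ Finset.range (x (π j)),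
        w (π j) * ((∑ ℓ ∈ Finset.range j, p (π ℓ) * (x (π ℓ) : ℝ))
          + ((r : ℝ) + 1) * p (π j))
      = ∑ j ∈ Finset.range ϑ,
          ((1 / 2) * (∑ ℓ ∈ Finset.range (j + 1), p (π ℓ) * (x (π ℓ) : ℝ)) ^ 2
              * (w (π j) / p (π j)
                  - (if j + 1 < ϑ then w (π (j + 1)) / p (π (j + 1)) else 0))
            + (1 / 2) * (x (π j) : ℝ) * p (π j) * w (π j)) := by
  set Z : ℕ → ℝ := fun j => ∑ ℓ ∈ range j, p (π ℓ) * (x (π ℓ) : ℝ)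
  set ρ : ℕ → ℝ := fun j => w (π j) / p (π j)
  have hblock : ∀ j ∈ range ϑ, ∑ r ∈ range (x (π j)), w (π j) * (Z j + ((r : ℝ) + 1) * p (π j))
      = 1 / 2 * Z (j + 1) ^ 2 * ρ j - 1 / 2 * Z j ^ 2 * ρ j
        + 1 / 2 * (x (π j) : ℝ) * p (π j) * w (π j) := fun j hj => by
    rw [sum_range_mul_add_succ_mul_eq_sq_sub_sq _ _ _ _ (hp _ (hπ.mapsTo (mem_range.mp hj))).ne']
    simp only [Z, ρ, sum_range_succ]
  have hshift : ∑ j ∈ range ϑ, 1 / 2 * Z j ^ 2 * ρ j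
      = ∑ j ∈ range ϑ, 1 / 2 * Z (j + 1) ^ 2 * (if j + 1 < ϑ then ρ (j + 1) else 0) := by
    simp only [mul_ite, mul_zero]
    exact sum_range_eq_sum_range_succ_ite (fun j => 1 / 2 * Z j ^ 2 * ρ j) (by simp [Z]) ϑ
  rw [sum_congr rfl hblock]
  simp only [mul_sub, sum_add_distrib, sum_sub_distrib, hshift]
  rfl

/-- Machine contribution identity for weighted completion times (Knop–Koutecký):
a machine processes, for each `j < ϑ`, `x (π j)` jobs of kind `π j` (processing
time `p (π j) > 0`, weight `w (π j) ≥ 0`) consecutively in Smith order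
(`ρ(π 0) ≥ ρ(π 1) ≥ …` where `ρ j = w j / p j`, with `ρ(π ϑ) = 0` by convention).
Then the sum of weighted completion times equals
`∑_j (½ z_j² (ρ(π j) - ρ(π (j+1))) + ½ x_{π j} p_{π j} w_{π j})`
with `z_j = ∑_{ℓ ≤ j} p_{π ℓ} x_{π ℓ}`. -/
theorem machine_contribution_identity
    (ϑ : ℕ) (p w : ℕ → ℝ) (x : ℕ → ℕ) (π : ℕ → ℕ)
    (hπ : Set.BijOn π (Set.Iio ϑ) (Set.Iio ϑ))
    (hp : ∀ j < ϑ, 0 < p j) (hw : ∀ j < ϑ, 0 ≤ w j)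
    (hsort : ∀ j j' : ℕ, j ≤ j' → j' < ϑ →
      w (π j') / p (π j') ≤ w (π j) / p (π j)) :
    ∑ j ∈ Finset.range ϑ, ∑ r ∈ Finset.range (x (π j)),
        w (π j) * ((∑ ℓ ∈ Finset.range j, p (π ℓ) * (x (π ℓ) : ℝ))
          + ((r : ℝ) + 1) * p (π j))
      = ∑ j ∈ Finset.range ϑ,
          ((1 / 2) * (∑ ℓ ∈ Finset.range (j + 1), p (π ℓ) * (x (π ℓ) : ℝ)) ^ 2
              * (w (π j) / p (π j)
                  - (if j + 1 < ϑ then w (π (j + 1)) / p (π (j + 1)) else 0))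
            + (1 / 2) * (x (π j) : ℝ) * p (π j) * w (π j)) :=
  machine_contribution_identity_general ϑ p w x π hπ hp
end
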